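/- arXiv:0909.2929 — 5 statements merged into one kernel-verified Lean document; each statement's English description precedes it below -/
import Mathlib

section
/- Let a < b be real numbers and let ω : [a,b] → ℝ be a càdlàg function (right-continuous with left limits). Then the Laplace asymptotics lim_{c→+∞} (1/c)·log( ∫_a^b e^{−c·ω(y)} dy ) = sup_{y∈(a,b)} (−ω(y)) holds; in particular, if ω is nonnegative on [a,b] with inf_{(a,b)} ω = 0, then ∫_a^b e^{−c·ω(y)} dy = e^{o(c)} as c → +∞. -/
/-!
With `M = sup (-ω)` over `(a, b)`, the integral is at most `(b - a) e^{cM}`. Conversely, for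
`m < M` pick `y₀` with `-ω y₀ > m`; right continuity at `y₀` gives an interval `[y₀, y₀ + δ]` on
which `-ω > m`, so the integral is at least `δ e^{cm}`. Taking `c⁻¹ log` of both bounds gives the
limit `M`. That the integral is finite at all comes from compactness (a càdlàg function is locally,
hence globally, bounded) and from writing `ω` as the a.e. limit of the step functions
`y ↦ ω (⌈n y⌉ / n)`.
-/

open Filter Set MeasureTheory Topology

theorem IsCompact.bddAbove_image_of_isBoundedUnder {X α : Type*} [TopologicalSpace X]
    [SemilatticeSup α] [Nonempty α] {K : Set X} {f : X → α} (hK : IsCompact K)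
    (hf : ∀ x ∈ K, IsBoundedUnder (· ≤ ·) (𝓝[K] x) f) : BddAbove (f '' K) := by
  refine hK.induction_on (p := fun s => BddAbove (f '' s)) (by simp)
    (fun s t hst ht => ht.mono (image_mono hst))
    (fun s t hs ht => by rw [image_union]; exact hs.union ht) fun x hx => ?_
  obtain ⟨C, hC⟩ := hf x hx
  exact ⟨{y | f y ≤ C}, hC, C, by rintro _ ⟨y, hy, rfl⟩; exact hy⟩

theorem tendsto_ceil_mul_div_nhdsGE (y : ℝ) :
    Tendsto (fun n : ℕ => (⌈y * (n + 1)⌉ : ℝ) / (n + 1)) atTop (𝓝[≥] y) := by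
  have hpos (n : ℕ) : (0 : ℝ) < n + 1 := n.cast_add_one_pos
  have hge (n : ℕ) : y ≤ (⌈y * (n + 1)⌉ : ℝ) / (n + 1) :=
    (le_div_iff₀ (hpos n)).2 (Int.le_ceil _)
  have hle (n : ℕ) : (⌈y * (n + 1)⌉ : ℝ) / (n + 1) ≤ y + 1 / (n + 1) := by
    rw [div_le_iff₀ (hpos n), add_mul, one_div_mul_cancel (hpos n).ne']
    exact (Int.ceil_lt_add_one _).le
  have hlim : Tendsto (fun n : ℕ => y + 1 / ((n : ℝ) + 1)) atTop (𝓝 y) := by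
    simpa using tendsto_one_div_add_atTop_nhds_zero_nat.const_add y
  exact tendsto_nhdsWithin_of_tendsto_nhds_of_eventually_within _
    (tendsto_of_tendsto_of_tendsto_of_le_of_le tendsto_const_nhds hlim hge hle)
    (Eventually.of_forall hge)

theorem aemeasurable_of_ae_continuousWithinAt_Ici {β : Type*} [TopologicalSpace β]
    [TopologicalSpace.PseudoMetrizableSpace β] [MeasurableSpace β] [BorelSpace β]
    {μ : Measure ℝ} {f : ℝ → β}
    (hf : ∀ᵐ x ∂μ, ContinuousWithinAt f (Ici x) x) : AEMeasurable f μ := by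
  refine aemeasurable_of_tendsto_metrizable_ae'
    (f := fun (n : ℕ) y => f (⌈y * ((n : ℝ) + 1)⌉ / ((n : ℝ) + 1))) (fun n => ?_) ?_
  · exact ((measurable_of_countable fun k : ℤ => f (k / ((n : ℝ) + 1))).comp
      (Int.measurable_ceil.comp (measurable_id.mul_const _))).aemeasurable
  · filter_upwards [hf] with y hy using hy.tendsto.comp (tendsto_ceil_mul_div_nhdsGE y)

theorem intervalIntegral_le_mul_of_le_on_Ioo {f : ℝ → ℝ} {a b C : ℝ} (hab : a ≤ b)
    (hf₀ : ∀ y ∈ Ioo a b, 0 ≤ f y) (hfC : ∀ y ∈ Ioo a b, f y ≤ C) :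
    ∫ y in a..b, f y ≤ (b - a) * C := by
  rw [intervalIntegral.integral_of_le hab, integral_Ioc_eq_integral_Ioo]
  calc ∫ y in Ioo a b, f y ≤ ∫ _ in Ioo a b, C :=
        integral_mono_of_nonneg (ae_restrict_of_forall_mem measurableSet_Ioo hf₀)
          (integrable_const C) (ae_restrict_of_forall_mem measurableSet_Ioo hfC)
    _ = (b - a) * C := by simp [hab]

theorem mul_le_intervalIntegral_of_le_on_Icc {f : ℝ → ℝ} {a b c d C : ℝ}
    (hf : IntervalIntegrable f volume a b) (hf₀ : ∀ y ∈ Ioc a b, 0 ≤ f y)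
    (hac : a ≤ c) (hcd : c ≤ d) (hdb : d ≤ b) (hCf : ∀ y ∈ Icc c d, C ≤ f y) :
    (d - c) * C ≤ ∫ y in a..b, f y :=
  calc (d - c) * C = ∫ _ in c..d, C := by simp
    _ ≤ ∫ y in c..d, f y := intervalIntegral.integral_mono_on hcd intervalIntegrable_const
        (hf.mono_set <| by
          rw [uIcc_of_le hcd, uIcc_of_le (hac.trans (hcd.trans hdb))]
          exact Icc_subset_Icc hac hdb) hCf
    _ ≤ ∫ y in a..b, f y := intervalIntegral.integral_mono_interval hac hcd hdb
        (ae_restrict_of_forall_mem measurableSet_Ioc hf₀) hf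

theorem tendsto_inv_mul_log_mul_exp {k : ℝ} (hk : 0 < k) (m : ℝ) :
    Tendsto (fun c => c⁻¹ * Real.log (k * Real.exp (c * m))) atTop (𝓝 m) := by
  have hlim : Tendsto (fun c : ℝ => m + c⁻¹ * Real.log k) atTop (𝓝 m) := by
    simpa using (tendsto_inv_atTop_zero.mul_const (Real.log k)).const_add m
  refine hlim.congr' ((eventually_ne_atTop 0).mono fun c hc => ?_)
  beta_reduce
  rw [Real.log_mul hk.ne' (Real.exp_ne_zero _), Real.log_exp]
  field_simp
  ring

theorem tendsto_inv_mul_log_of_exp_bounds {I : ℝ → ℝ} {K M : ℝ} (hK : 0 < K)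
    (hup : ∀ᶠ c in atTop, I c ≤ K * Real.exp (c * M))
    (hlow : ∀ m < M, ∃ k > 0, ∀ᶠ c in atTop, k * Real.exp (c * m) ≤ I c) :
    Tendsto (fun c => c⁻¹ * Real.log (I c)) atTop (𝓝 M) := by
  refine tendsto_order.2 ⟨fun x hx => ?_, fun x hx => ?_⟩
  · obtain ⟨m, hxm, hmM⟩ := exists_between hx
    obtain ⟨k, hk, hkI⟩ := hlow m hmM
    filter_upwards [(tendsto_inv_mul_log_mul_exp hk m).eventually (lt_mem_nhds hxm), hkI,
      eventually_gt_atTop 0] with c hxc hkc hc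
    exact hxc.trans_le <| mul_le_mul_of_nonneg_left
      (Real.log_le_log (by positivity) hkc) (inv_nonneg.2 hc.le)
  · obtain ⟨k, hk, hkI⟩ := hlow (M - 1) (by linarith)
    filter_upwards [(tendsto_inv_mul_log_mul_exp hK M).eventually (gt_mem_nhds hx), hup, hkI,
      eventually_gt_atTop 0] with c hxc hKc hkc hc
    have hIc : 0 < I c := (by positivity : 0 < k * Real.exp (c * (M - 1))).trans_le hkc
    exact (mul_le_mul_of_nonneg_left (Real.log_le_log hIc hKc) (inv_nonneg.2 hc.le)).trans_lt hxc

structure IsCadlagOn {E : Type*} [TopologicalSpace E] (f : ℝ → E) (a b : ℝ) : Prop where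
  continuousWithinAt_Ici : ∀ x ∈ Ico a b, ContinuousWithinAt f (Ici x) x
  exists_tendsto_nhdsLT : ∀ x ∈ Ioc a b, ∃ l, Tendsto f (𝓝[<] x) (𝓝 l)

namespace IsCadlagOn

variable {a b : ℝ}

theorem comp {E F : Type*} [TopologicalSpace E] [TopologicalSpace F] {f : ℝ → E} {g : E → F}
    (hg : Continuous g) (hf : IsCadlagOn f a b) : IsCadlagOn (g ∘ f) a b where
  continuousWithinAt_Ici x hx := hg.continuousAt.comp_continuousWithinAt (hf.1 x hx)
  exists_tendsto_nhdsLT x hx :=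
    let ⟨l, hl⟩ := hf.2 x hx
    ⟨g l, (hg.tendsto l).comp hl⟩

variable {E : Type*} [NormedAddCommGroup E] {f : ℝ → E}

theorem isBoundedUnder_norm (hf : IsCadlagOn f a b) {x : ℝ} (hx : x ∈ Icc a b) :
    IsBoundedUnder (· ≤ ·) (𝓝[Icc a b] x) (‖f ·‖) := by
  have hleft : ∃ l, Tendsto f (𝓝[Icc a b ∩ Iio x] x) (𝓝 l) := by
    rcases hx.1.eq_or_lt with rfl | hax
    · refine ⟨f a, ?_⟩
      rw [show Icc a b ∩ Iio a = ∅ from eq_empty_of_forall_notMem fun y hy => hy.2.not_ge hy.1.1,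
        nhdsWithin_empty]
      exact tendsto_bot
    · exact (hf.2 x ⟨hax, hx.2⟩).imp fun _ hl =>
        hl.mono_left (nhdsWithin_mono _ inter_subset_right)
  have hright : ∃ l, Tendsto f (𝓝[Icc a b ∩ Ici x] x) (𝓝 l) := by
    refine ⟨f x, ?_⟩
    rcases hx.2.eq_or_lt with rfl | hxb
    · exact (continuousWithinAt_singleton.mono fun y hy => hy.1.2.antisymm hy.2).tendsto
    · exact ((hf.1 x ⟨hx.1, hxb⟩).mono inter_subset_right).tendsto
  obtain ⟨l₁, h₁⟩ := hleft
  obtain ⟨l₂, h₂⟩ := hright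
  have hsplit : Icc a b = (Icc a b ∩ Iio x) ∪ (Icc a b ∩ Ici x) := by
    rw [← inter_union_distrib_left, Iio_union_Ici, inter_univ]
  rw [hsplit, nhdsWithin_union, IsBoundedUnder, Filter.map_sup]
  exact isBounded_sup h₁.norm.isBoundedUnder_le h₂.norm.isBoundedUnder_le

theorem exists_norm_le (hf : IsCadlagOn f a b) : ∃ C, ∀ y ∈ Icc a b, ‖f y‖ ≤ C :=
  let ⟨C, hC⟩ := isCompact_Icc.bddAbove_image_of_isBoundedUnder fun _ hx =>
    hf.isBoundedUnder_norm hx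
  ⟨C, fun _ hy => hC (mem_image_of_mem _ hy)⟩

theorem intervalIntegrable [MeasurableSpace E] [BorelSpace E]
    [SecondCountableTopology E] (hf : IsCadlagOn f a b) (hab : a ≤ b) :
    IntervalIntegrable f volume a b := by
  rw [intervalIntegrable_iff_integrableOn_Ioo_of_le hab]
  obtain ⟨C, hC⟩ := hf.exists_norm_le
  refine Integrable.of_bound ?_ C (ae_restrict_of_forall_mem measurableSet_Ioo
    fun y hy => hC y (Ioo_subset_Icc_self hy))
  refine (aemeasurable_of_ae_continuousWithinAt_Ici ?_).aestronglyMeasurable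
  exact ae_restrict_of_forall_mem measurableSet_Ioo fun y hy => hf.1 y (Ioo_subset_Ico_self hy)

theorem tendsto_inv_mul_log_integral_exp {ω : ℝ → ℝ} {a b : ℝ}
    (hω : IsCadlagOn ω a b) (hab : a < b) :
    Tendsto (fun c : ℝ => c⁻¹ * Real.log (∫ y in a..b, Real.exp (-(c * ω y))))
      atTop (𝓝 (sSup ((fun y => -ω y) '' Ioo a b))) := by
  obtain ⟨C, hC⟩ := hω.exists_norm_le
  have hbdd : BddAbove ((fun y => -ω y) '' Ioo a b) := ⟨C, by
    rintro _ ⟨y, hy, rfl⟩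
    exact (neg_le_abs _).trans (hC y (Ioo_subset_Icc_self hy))⟩
  have hint (c : ℝ) : IntervalIntegrable (fun y => Real.exp (-(c * ω y))) volume a b :=
    (hω.comp (g := fun t => Real.exp (-(c * t))) (by fun_prop)).intervalIntegrable hab.le
  refine tendsto_inv_mul_log_of_exp_bounds (sub_pos.2 hab) ?_ fun m hm => ?_
  · filter_upwards [eventually_ge_atTop 0] with c hc
    refine intervalIntegral_le_mul_of_le_on_Ioo hab.le (fun _ _ => (Real.exp_pos _).le)
      fun y hy => Real.exp_le_exp.2 ?_
    have := le_csSup hbdd (mem_image_of_mem _ hy)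
    nlinarith
  · obtain ⟨_, ⟨y₀, hy₀, rfl⟩, hmy₀⟩ := exists_lt_of_lt_csSup ((nonempty_Ioo.2 hab).image _) hm
    have hnear : ∀ᶠ y in 𝓝[≥] y₀, ω y < -m :=
      hω.1 y₀ (Ioo_subset_Ico_self hy₀) (Iio_mem_nhds (by linarith))
    obtain ⟨u, hy₀u, hu⟩ := mem_nhdsGE_iff_exists_Icc_subset.1 hnear
    have hy₀d : y₀ < min u b := lt_min hy₀u hy₀.2
    refine ⟨min u b - y₀, sub_pos.2 hy₀d, ?_⟩
    filter_upwards [eventually_ge_atTop 0] with c hc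
    refine mul_le_intervalIntegral_of_le_on_Icc (hint c) (fun _ _ => (Real.exp_pos _).le)
      hy₀.1.le hy₀d.le (min_le_right _ _) fun y hy => Real.exp_le_exp.2 ?_
    have : ω y < -m := hu ⟨hy.1, hy.2.trans (min_le_left _ _)⟩
    nlinarith

end IsCadlagOn

/-- Let `a < b` and let `ω : [a,b] → ℝ` be càdlàg (right-continuous on
`[a,b)` with left limits on `(a,b]`).  Then the Laplace asymptotics
`lim_{c→+∞} (1/c)·log(∫_a^b e^{−c·ω(y)} dy) = sup_{y∈(a,b)} (−ω(y))` holds; in particular,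
if `ω` is nonnegative on `[a,b]` with `inf_{(a,b)} ω = 0`, then
`∫_a^b e^{−c·ω(y)} dy = e^{o(c)}` as `c → +∞`. -/
theorem laplace_asymptotics_cadlag
    (a b : ℝ) (hab : a < b) (ω : ℝ → ℝ)
    (hright : ∀ x ∈ Set.Ico a b, ContinuousWithinAt ω (Set.Ici x) x)
    (hleft : ∀ x ∈ Set.Ioc a b, ∃ l : ℝ, Tendsto ω (𝓝[<] x) (𝓝 l)) :
    Tendsto (fun c : ℝ => c⁻¹ * Real.log (∫ y in a..b, Real.exp (-(c * ω y))))
      atTop (𝓝 (sSup ((fun y => -ω y) '' Set.Ioo a b))) ∧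
    ((∀ y ∈ Set.Icc a b, 0 ≤ ω y) → sInf (ω '' Set.Ioo a b) = 0 →
      (fun c : ℝ => Real.log (∫ y in a..b, Real.exp (-(c * ω y))))
        =o[atTop] (fun c : ℝ => c)) := by
  have hlim := IsCadlagOn.tendsto_inv_mul_log_integral_exp ⟨hright, hleft⟩ hab
  refine ⟨hlim, fun _ hinf => ?_⟩
  have hsup : sSup ((fun y => -ω y) '' Ioo a b) = 0 := by
    rw [← image_image (fun t => -t) ω, image_neg_eq_neg, Real.sSup_neg, hinf, neg_zero]
  rw [hsup] at hlim
  refine (Asymptotics.isLittleO_iff_tendsto' ?_).2 (by simpa only [div_eq_inv_mul] using hlim)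
  filter_upwards [eventually_ne_atTop 0] with c hc h using absurd h hc
end

section
/- Let a < b be real numbers and let ω : [a,b] → ℝ be càdlàg and continuous at its local extrema. Then the supremum and the infimum of ω on [a,b] are attained: there exist x, y ∈ [a,b] such that sup_{t∈[a,b]} ω(t) = ω(x) and inf_{t∈[a,b]} ω(t) = ω(y). -/
/-!
Near any `x ∈ [a, b]`, a càdlàg `ω` tends to `ω x` from the right and to `ω (x-)` from the
left. By compactness of `[a, b]`, every value that `ω` approaches on `[a, b]`
(including `±∞`) is therefore of the form `ω x` or `ω (x-)`. Hence `ω` is bounded, and its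
supremum is `ω x` or `ω (x-)` for some `x`; in the second case `x` is a left local maximum, so
`ω (x-) = ω x` by continuity at local extrema. The infimum is handled the same way.
-/

open Filter Set Topology Function

/-- `x0` is a left local maximum of `ω` relative to the interval `[a,b]`. -/
def LeftLocalMaxOn (ω : ℝ → ℝ) (a b x0 : ℝ) : Prop :=
  ∃ ε > (0 : ℝ), ∀ x ∈ Set.Ioo (x0 - ε) x0 ∩ Set.Icc a b, ω x ≤ Function.leftLim ω x0

/-- `x0` is a right local maximum of `ω` relative to the interval `[a,b]`. -/
def RightLocalMaxOn (ω : ℝ → ℝ) (a b x0 : ℝ) : Prop :=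
  ∃ ε > (0 : ℝ), ∀ x ∈ Set.Ioo x0 (x0 + ε) ∩ Set.Icc a b, ω x ≤ ω x0

/-- `x0` is a left local minimum of `ω` relative to the interval `[a,b]`. -/
def LeftLocalMinOn (ω : ℝ → ℝ) (a b x0 : ℝ) : Prop :=
  ∃ ε > (0 : ℝ), ∀ x ∈ Set.Ioo (x0 - ε) x0 ∩ Set.Icc a b, Function.leftLim ω x0 ≤ ω x

/-- `x0` is a right local minimum of `ω` relative to the interval `[a,b]`. -/
def RightLocalMinOn (ω : ℝ → ℝ) (a b x0 : ℝ) : Prop :=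
  ∃ ε > (0 : ℝ), ∀ x ∈ Set.Ioo x0 (x0 + ε) ∩ Set.Icc a b, ω x0 ≤ ω x

/-- `x0` is a local extremum of `ω` relative to the interval `[a,b]` (left notions
require `x0 ∈ (a,b]`, right notions require `x0 ∈ [a,b)`). -/
def LocalExtremumOn (ω : ℝ → ℝ) (a b x0 : ℝ) : Prop :=
  (x0 ∈ Set.Ioc a b ∧ (LeftLocalMaxOn ω a b x0 ∨ LeftLocalMinOn ω a b x0)) ∨
  (x0 ∈ Set.Ico a b ∧ (RightLocalMaxOn ω a b x0 ∨ RightLocalMinOn ω a b x0))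

lemma nhdsWithin_eq_inter_Ici_sup_inter_Iio {α : Type*} [TopologicalSpace α] [LinearOrder α]
    (s : Set α) (x : α) :
    𝓝[s] x = 𝓝[s ∩ Ici x] x ⊔ 𝓝[s ∩ Iio x] x := by
  rw [← nhdsWithin_union, ← inter_union_distrib_left, Ici_union_Iio, inter_univ]

lemma Filter.Tendsto.nhds_inf_neBot {α β : Type*} [TopologicalSpace β] {f : α → β}
    {F : Filter α} {L : Filter β} {p : β} (hf : Tendsto f F (𝓝 p)) (hF : (F ⊓ comap f L).NeBot) :
    (𝓝 p ⊓ L).NeBot :=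
  (hF.map f).mono (map_inf_le.trans (inf_le_inf hf map_comap_le))

namespace Cadlag

variable {a b : ℝ} {ω : ℝ → ℝ}

lemma tendsto_nhdsWithin_Icc_inter_Ici
    (hright : ∀ x ∈ Ico a b, ContinuousWithinAt ω (Ici x) x) {x : ℝ} (hx : x ∈ Icc a b) :
    Tendsto ω (𝓝[Icc a b ∩ Ici x] x) (𝓝 (ω x)) := by
  rcases hx.2.eq_or_lt with rfl | hxb
  · have hsub : Icc a x ∩ Ici x ⊆ {x} := fun y hy ↦ le_antisymm hy.1.2 hy.2
    exact (tendsto_pure_nhds ω x).mono_left (nhdsWithin_singleton x ▸ nhdsWithin_mono x hsub)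
  · exact (hright x ⟨hx.1, hxb⟩).tendsto.mono_left (nhdsWithin_mono _ inter_subset_right)

lemma tendsto_leftLim (hleft : ∀ x ∈ Ioc a b, ∃ l : ℝ, Tendsto ω (𝓝[<] x) (𝓝 l))
    {x : ℝ} (hx : x ∈ Ioc a b) : Tendsto ω (𝓝[<] x) (𝓝 (leftLim ω x)) := by
  obtain ⟨l, hl⟩ := hleft x hx
  rwa [leftLim_eq_of_tendsto hl]

lemma exists_nhds_inf_neBot
    (hright : ∀ x ∈ Ico a b, ContinuousWithinAt ω (Ici x) x)
    (hleft : ∀ x ∈ Ioc a b, ∃ l : ℝ, Tendsto ω (𝓝[<] x) (𝓝 l))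
    {L : Filter ℝ} [L.NeBot] (hL : ω '' Icc a b ∈ L) :
    ∃ x ∈ Icc a b, (𝓝 (ω x) ⊓ L).NeBot ∨ x ∈ Ioc a b ∧ (𝓝 (leftLim ω x) ⊓ L).NeBot := by
  have := comap_inf_principal_neBot_of_image_mem ‹L.NeBot› hL
  obtain ⟨x, hx, hcluster⟩ :=
    isCompact_Icc.exists_clusterPt (f := comap ω L ⊓ 𝓟 (Icc a b)) inf_le_right
  have hsplit : (𝓝[Icc a b ∩ Ici x] x ⊓ comap ω L).NeBot ∨
      (𝓝[Icc a b ∩ Iio x] x ⊓ comap ω L).NeBot := by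
    rw [← sup_neBot, ← inf_sup_right, ← nhdsWithin_eq_inter_Ici_sup_inter_Iio,
      nhdsWithin, inf_assoc, inf_comm (𝓟 _)]
    exact hcluster
  refine ⟨x, hx, hsplit.imp (tendsto_nhdsWithin_Icc_inter_Ici hright hx).nhds_inf_neBot
    fun h ↦ ?_⟩
  have hxa : a < x := by
    by_contra! hxa
    have hempty : Icc a b ∩ Iio x = ∅ :=
      eq_empty_of_forall_notMem fun y hy ↦ (hy.1.1.trans_lt hy.2).not_ge hxa
    rw [hempty, nhdsWithin_empty, bot_inf_eq] at h
    exact h.ne rfl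
  refine ⟨⟨hxa, hx.2⟩, (tendsto_leftLim hleft ⟨hxa, hx.2⟩).nhds_inf_neBot ?_⟩
  exact h.mono (inf_le_inf_right _ (nhdsWithin_mono x inter_subset_right))

lemma bddAbove_image_Icc
    (hright : ∀ x ∈ Ico a b, ContinuousWithinAt ω (Ici x) x)
    (hleft : ∀ x ∈ Ioc a b, ∃ l : ℝ, Tendsto ω (𝓝[<] x) (𝓝 l)) :
    BddAbove (ω '' Icc a b) := by
  by_contra hunbdd
  have : (atTop ⊓ 𝓟 (ω '' Icc a b)).NeBot := atTop_basis.inf_principal_neBot_iff.mpr fun c _ ↦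
    let ⟨y, hy, hcy⟩ := not_bddAbove_iff.mp hunbdd c
    ⟨y, hcy.le, hy⟩
  obtain ⟨x, -, h | ⟨-, h⟩⟩ :=
    exists_nhds_inf_neBot hright hleft (mem_inf_of_right (f := atTop) (mem_principal_self _))
  all_goals exact h.ne ((disjoint_nhds_atTop _).mono_right inf_le_left).eq_bot

lemma bddBelow_image_Icc
    (hright : ∀ x ∈ Ico a b, ContinuousWithinAt ω (Ici x) x)
    (hleft : ∀ x ∈ Ioc a b, ∃ l : ℝ, Tendsto ω (𝓝[<] x) (𝓝 l)) :
    BddBelow (ω '' Icc a b) := by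
  by_contra hunbdd
  have : (atBot ⊓ 𝓟 (ω '' Icc a b)).NeBot := atBot_basis.inf_principal_neBot_iff.mpr fun c _ ↦
    let ⟨y, hy, hyc⟩ := not_bddBelow_iff.mp hunbdd c
    ⟨y, hyc.le, hy⟩
  obtain ⟨x, -, h | ⟨-, h⟩⟩ :=
    exists_nhds_inf_neBot hright hleft (mem_inf_of_right (f := atBot) (mem_principal_self _))
  all_goals exact h.ne ((disjoint_nhds_atBot _).mono_right inf_le_left).eq_bot

lemma exists_eq_or_eq_leftLim_of_mem_closure
    (hright : ∀ x ∈ Ico a b, ContinuousWithinAt ω (Ici x) x)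
    (hleft : ∀ x ∈ Ioc a b, ∃ l : ℝ, Tendsto ω (𝓝[<] x) (𝓝 l))
    {M : ℝ} (hM : M ∈ closure (ω '' Icc a b)) :
    ∃ x ∈ Icc a b, M = ω x ∨ x ∈ Ioc a b ∧ M = leftLim ω x := by
  have : (𝓝 M ⊓ 𝓟 (ω '' Icc a b)).NeBot := mem_closure_iff_clusterPt.mp hM
  obtain ⟨x, hx, h⟩ :=
    exists_nhds_inf_neBot hright hleft (mem_inf_of_right (f := 𝓝 M) (mem_principal_self _))
  have eq_of_neBot : ∀ {p : ℝ}, (𝓝 p ⊓ (𝓝 M ⊓ 𝓟 (ω '' Icc a b))).NeBot → M = p := fun hp ↦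
    by_contra fun hne ↦ hp.ne ((disjoint_nhds_nhds.mpr (Ne.symm hne)).mono_right inf_le_left).eq_bot
  exact ⟨x, hx, h.imp eq_of_neBot (And.imp_right eq_of_neBot)⟩

lemma exists_sSup_image_Icc_eq (hab : a ≤ b)
    (hright : ∀ x ∈ Ico a b, ContinuousWithinAt ω (Ici x) x)
    (hleft : ∀ x ∈ Ioc a b, ∃ l : ℝ, Tendsto ω (𝓝[<] x) (𝓝 l))
    (hmax : ∀ x ∈ Ioc a b, LeftLocalMaxOn ω a b x → ω x = leftLim ω x) :
    ∃ x ∈ Icc a b, sSup (ω '' Icc a b) = ω x := by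
  have hbdd := bddAbove_image_Icc hright hleft
  obtain ⟨x, hx, h | ⟨hx', h⟩⟩ := exists_eq_or_eq_leftLim_of_mem_closure hright hleft
    (csSup_mem_closure ((nonempty_Icc.mpr hab).image ω) hbdd)
  · exact ⟨x, hx, h⟩
  · have hleftMax : LeftLocalMaxOn ω a b x :=
      ⟨1, one_pos, fun y hy ↦ h ▸ le_csSup hbdd (mem_image_of_mem ω hy.2)⟩
    exact ⟨x, hx, h.trans (hmax x hx' hleftMax).symm⟩

lemma exists_sInf_image_Icc_eq (hab : a ≤ b)
    (hright : ∀ x ∈ Ico a b, ContinuousWithinAt ω (Ici x) x)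
    (hleft : ∀ x ∈ Ioc a b, ∃ l : ℝ, Tendsto ω (𝓝[<] x) (𝓝 l))
    (hmin : ∀ x ∈ Ioc a b, LeftLocalMinOn ω a b x → ω x = leftLim ω x) :
    ∃ x ∈ Icc a b, sInf (ω '' Icc a b) = ω x := by
  have hbdd := bddBelow_image_Icc hright hleft
  obtain ⟨x, hx, h | ⟨hx', h⟩⟩ := exists_eq_or_eq_leftLim_of_mem_closure hright hleft
    (csInf_mem_closure ((nonempty_Icc.mpr hab).image ω) hbdd)
  · exact ⟨x, hx, h⟩
  · have hleftMin : LeftLocalMinOn ω a b x :=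
      ⟨1, one_pos, fun y hy ↦ h ▸ csInf_le hbdd (mem_image_of_mem ω hy.2)⟩
    exact ⟨x, hx, h.trans (hmin x hx' hleftMin).symm⟩

end Cadlag

open Cadlag in
/-- Let `a < b` and let `ω : [a,b] → ℝ` be càdlàg and continuous at its
local extrema.  Then the supremum and the infimum of `ω` on `[a,b]` are attained. -/
theorem cadlag_continuous_at_extrema_sup_inf_attained
    (a b : ℝ) (hab : a < b) (ω : ℝ → ℝ)
    (hright : ∀ x ∈ Set.Ico a b, ContinuousWithinAt ω (Set.Ici x) x)
    (hleft : ∀ x ∈ Set.Ioc a b, ∃ l : ℝ, Tendsto ω (𝓝[<] x) (𝓝 l))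
    (hext : ∀ x0 ∈ Set.Ioc a b, LocalExtremumOn ω a b x0 → ω x0 = Function.leftLim ω x0) :
    (∃ x ∈ Set.Icc a b, sSup (ω '' Set.Icc a b) = ω x) ∧
    (∃ y ∈ Set.Icc a b, sInf (ω '' Set.Icc a b) = ω y) :=
  ⟨exists_sSup_image_Icc_eq hab.le hright hleft fun x hx h ↦ hext x hx (.inl ⟨hx, .inl h⟩),
    exists_sInf_image_Icc_eq hab.le hright hleft fun x hx h ↦ hext x hx (.inl ⟨hx, .inr h⟩)⟩
end

section
/- Let ω : ℝ → ℝ be càdlàg, continuous at its local extrema, and taking pairwise distinct values at its local extrema (if x ≠ y are both local extrema of ω then ω(x) ≠ ω(y)). Then for every c > 0, the set M_c(ω) of c-extrema of ω has no accumulation point in ℝ. -/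
open Filter Set Topology Function

/-- A function `ω : ℝ → ℝ` is càdlàg: right-continuous everywhere, with left limits
everywhere; `ω(x−)` is then `Function.leftLim ω x`. -/
def Cadlag (ω : ℝ → ℝ) : Prop :=
  (∀ x : ℝ, ContinuousWithinAt ω (Set.Ici x) x) ∧
  (∀ x : ℝ, ∃ l : ℝ, Tendsto ω (𝓝[<] x) (𝓝 l))

/-- `x0` is a left local maximum of `ω`. -/
def LeftLocalMax (ω : ℝ → ℝ) (x0 : ℝ) : Prop :=
  ∃ ε > (0 : ℝ), ∀ x ∈ Set.Ioo (x0 - ε) x0, ω x ≤ Function.leftLim ω x0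

/-- `x0` is a right local maximum of `ω`. -/
def RightLocalMax (ω : ℝ → ℝ) (x0 : ℝ) : Prop :=
  ∃ ε > (0 : ℝ), ∀ x ∈ Set.Ioo x0 (x0 + ε), ω x ≤ ω x0

/-- `x0` is a left local minimum of `ω`. -/
def LeftLocalMin (ω : ℝ → ℝ) (x0 : ℝ) : Prop :=
  ∃ ε > (0 : ℝ), ∀ x ∈ Set.Ioo (x0 - ε) x0, Function.leftLim ω x0 ≤ ω x

/-- `x0` is a right local minimum of `ω`. -/
def RightLocalMin (ω : ℝ → ℝ) (x0 : ℝ) : Prop :=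
  ∃ ε > (0 : ℝ), ∀ x ∈ Set.Ioo x0 (x0 + ε), ω x0 ≤ ω x

/-- `x0` is a local extremum of `ω`. -/
def LocalExtremum (ω : ℝ → ℝ) (x0 : ℝ) : Prop :=
  LeftLocalMax ω x0 ∨ RightLocalMax ω x0 ∨ LeftLocalMin ω x0 ∨ RightLocalMin ω x0

/-- `ω` has a `c`-minimum at `x0`: there are `ξ < x0 < ζ` with
`ω(ξ) ≥ (ω(x0) ∧ ω(x0−)) + c`, `ω(ζ−) ≥ (ω(x0) ∧ ω(x0−)) + c`, and
`ω(x) ∧ ω(x−) > ω(x0) ∧ ω(x0−)` for all `x ∈ (ξ,ζ)`, `x ≠ x0`. -/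
def CMinimum (ω : ℝ → ℝ) (c x0 : ℝ) : Prop :=
  ∃ ξ ζ : ℝ, ξ < x0 ∧ x0 < ζ ∧
    min (ω x0) (Function.leftLim ω x0) + c ≤ ω ξ ∧
    min (ω x0) (Function.leftLim ω x0) + c ≤ Function.leftLim ω ζ ∧
    ∀ x ∈ Set.Ioo ξ ζ, x ≠ x0 →
      min (ω x0) (Function.leftLim ω x0) < min (ω x) (Function.leftLim ω x)

/-- `ω` has a `c`-maximum at `x0` if `−ω` has a `c`-minimum at `x0`. -/
def CMaximum (ω : ℝ → ℝ) (c x0 : ℝ) : Prop :=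
  CMinimum (fun x => -ω x) c x0

/-- `M_c(ω)`, the set of `c`-extrema of `ω`. -/
def CExtrema (ω : ℝ → ℝ) (c : ℝ) : Set ℝ :=
  {x : ℝ | CMinimum ω c x ∨ CMaximum ω c x}

/-!
A `c`-minimum `u` forces `ω` to rise by at least `c` above `min (ω u) (ω (u−))` inside its
witnessing interval `(ξ, ζ)`, and two `c`-minima `u < v` cannot hide inside each other's
witnessing intervals, because each would then be strictly below the other. Hence on an
interval where `ω` oscillates by less than `c` there is at most one `c`-minimum, and likewise
at most one `c`-maximum. Since `ω` has one-sided limits at `x`, it oscillates by less than `c`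
on small intervals `(a, x)` and `(x, b)`, so only finitely many `c`-extrema lie near `x`.
-/

section OscillationBound

variable {f : ℝ → ℝ} {a b y lo hi c : ℝ}

lemma leftLim_mem_of_mapsTo_Ioo {s : Set ℝ} (hs : IsClosed s)
    (hlim : ∃ l, Tendsto f (𝓝[<] y) (𝓝 l)) (hy : y ∈ Ioc a b) (h : MapsTo f (Ioo a b) s) :
    leftLim f y ∈ s := by
  obtain ⟨l, hl⟩ := hlim
  rw [leftLim_eq_of_tendsto (h := nhdsLT_neBot y) hl]
  refine hs.mem_of_tendsto hl ?_
  filter_upwards [Ioo_mem_nhdsLT hy.1] with t ht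
  exact h ⟨ht.1, ht.2.trans_le hy.2⟩

lemma subsingleton_cMinimum_of_mapsTo_Icc (hll : ∀ x, ∃ l, Tendsto f (𝓝[<] x) (𝓝 l))
    (h : MapsTo f (Ioo a b) (Icc lo hi)) (hc : hi - lo < c) :
    {y ∈ Ioo a b | CMinimum f c y}.Subsingleton := by
  set m : ℝ → ℝ := fun y => min (f y) (leftLim f y)
  have hleftLim : ∀ y ∈ Ioc a b, leftLim f y ∈ Icc lo hi := fun y hy =>
    leftLim_mem_of_mapsTo_Ioo isClosed_Icc (hll y) hy h
  have hm : ∀ y ∈ Ioo a b, lo ≤ m y := fun y hy =>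
    le_min (h hy).1 (hleftLim y ⟨hy.1, hy.2.le⟩).1
  have key : ∀ u ∈ Ioo a b, ∀ v ∈ Ioo a b, u < v → CMinimum f c u → ¬ CMinimum f c v := by
    rintro u hu v hv huv ⟨ξ₁, ζ₁, hξ₁, hζ₁, -, hrise₁, hbelow₁⟩
      ⟨ξ₂, ζ₂, hξ₂, hζ₂, hrise₂, -, hbelow₂⟩
    have hmu := hm u hu
    by_cases hζv : ζ₁ ≤ v
    · have := (hleftLim ζ₁ ⟨hu.1.trans hζ₁, hζv.trans hv.2.le⟩).2
      linarith
    have huv_m : m u < m v := hbelow₁ v ⟨hξ₁.trans huv, not_le.1 hζv⟩ huv.ne'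
    by_cases hξu : ξ₂ < u
    · exact (hbelow₂ u ⟨hξu, huv.trans hζ₂⟩ huv.ne).not_gt huv_m
    · have := (h ⟨hu.1.trans_le (not_lt.1 hξu), hξ₂.trans hv.2⟩).2
      linarith
  intro u hu v hv
  rcases lt_trichotomy u v with huv | rfl | hvu
  · exact absurd hv.2 (key u hu.1 v hv.1 huv hu.2)
  · rfl
  · exact absurd hu.2 (key v hv.1 u hu.1 hvu hv.2)

lemma subsingleton_cMaximum_of_mapsTo_Icc (hll : ∀ x, ∃ l, Tendsto f (𝓝[<] x) (𝓝 l))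
    (h : MapsTo f (Ioo a b) (Icc lo hi)) (hc : hi - lo < c) :
    {y ∈ Ioo a b | CMaximum f c y}.Subsingleton :=
  subsingleton_cMinimum_of_mapsTo_Icc (lo := -hi) (hi := -lo)
    (fun x => (hll x).elim fun l hl => ⟨-l, hl.neg⟩)
    (fun y hy => ⟨neg_le_neg (h hy).2, neg_le_neg (h hy).1⟩) (by linarith)

lemma finite_Ioo_inter_cExtrema_of_mapsTo_Icc (hll : ∀ x, ∃ l, Tendsto f (𝓝[<] x) (𝓝 l))
    (h : MapsTo f (Ioo a b) (Icc lo hi)) (hc : hi - lo < c) :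
    (Ioo a b ∩ CExtrema f c).Finite := by
  refine ((subsingleton_cMinimum_of_mapsTo_Icc hll h hc).finite.union
    (subsingleton_cMaximum_of_mapsTo_Icc hll h hc).finite).subset ?_
  rintro y ⟨hy, hmin | hmax⟩
  exacts [Or.inl ⟨hy, hmin⟩, Or.inr ⟨hy, hmax⟩]

end OscillationBound

theorem cExtrema_no_accumulation_point_general
    (ω : ℝ → ℝ) (hcad : Cadlag ω)
    (c : ℝ) (hc : 0 < c) :
    ∀ x : ℝ, ¬ AccPt x (𝓟 (CExtrema ω c)) := by
  intro x hacc
  obtain ⟨l, hl⟩ := hcad.2 x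
  have hr : Tendsto ω (𝓝[>] x) (𝓝 (ω x)) := (hcad.1 x).mono Ioi_subset_Ici_self
  have hsmall : ∀ m : ℝ, Icc (m - c / 3) (m + c / 3) ∈ 𝓝 m := fun m =>
    Icc_mem_nhds (by linarith) (by linarith)
  obtain ⟨a, hax, hleft⟩ := mem_nhdsLT_iff_exists_Ioo_subset.1 (hl (hsmall l))
  obtain ⟨b, hxb, hright⟩ := mem_nhdsGT_iff_exists_Ioo_subset.1 (hr (hsmall (ω x)))
  have hfin : (Ioo a b ∩ CExtrema ω c).Finite := by
    have hleft_fin := finite_Ioo_inter_cExtrema_of_mapsTo_Icc (c := c) hcad.2 hleft (by linarith)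
    have hright_fin := finite_Ioo_inter_cExtrema_of_mapsTo_Icc (c := c) hcad.2 hright (by linarith)
    refine ((hleft_fin.union hright_fin).insert x).subset ?_
    rintro y ⟨⟨hay, hyb⟩, hy⟩
    rcases lt_trichotomy y x with hyx | rfl | hxy
    exacts [Or.inr (Or.inl ⟨⟨hay, hyx⟩, hy⟩), Or.inl rfl, Or.inr (Or.inr ⟨⟨hxy, hyb⟩, hy⟩)]
  exact Set.Infinite.of_accPt (hacc.nhds_inter (Ioo_mem_nhds hax hxb)) hfin

/-- Let `ω : ℝ → ℝ` be càdlàg, continuous at its local extrema, with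
pairwise distinct values at its local extrema.  Then for every `c > 0` the set `M_c(ω)`
of `c`-extrema of `ω` has no accumulation point in `ℝ`. -/
theorem cExtrema_no_accumulation_point
    (ω : ℝ → ℝ) (hcad : Cadlag ω)
    (hext : ∀ x0 : ℝ, LocalExtremum ω x0 → ω x0 = Function.leftLim ω x0)
    (hdist : ∀ x y : ℝ, LocalExtremum ω x → LocalExtremum ω y → x ≠ y → ω x ≠ ω y)
    (c : ℝ) (hc : 0 < c) :
    ∀ x : ℝ, ¬ AccPt x (𝓟 (CExtrema ω c)) :=
  cExtrema_no_accumulation_point_general ω hcad c hc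
end

section
/- Let ω : ℝ → ℝ be càdlàg, continuous at its local extrema, and taking pairwise distinct values at its local extrema (if x ≠ y are both local extrema of ω then ω(x) ≠ ω(y)). Then for every c > 0 the c-maxima and c-minima of ω alternate: strictly between any two distinct c-minima of ω there is a c-maximum of ω, and strictly between any two distinct c-maxima of ω there is a c-minimum of ω. -/
open Filter Set Topology Function

/-!
Between two `c`-minima `x < y` let `S` be the supremum of `ω` on `[x, y]`. By compactness a càdlàg
function attains its supremum on `[x, y]`, either as a value or as a left limit. Each of the two
`c`-minima either rises by `c` inside `[x, y]` or lies in the basin of the other, strictly above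
it, and the two cannot both do the latter; so `S` exceeds both `ω x` and `ω y` by at least `c`.
Hence `S` is attained at some `z ∈ (x, y)`, which is a local extremum: so `ω` is continuous at `z`,
and by distinctness of extremal values `S` is attained nowhere else in `(x, y)`. Then `z` is a
`c`-maximum, witnessed by `ξ = x` and `ζ = y`. The case of two `c`-maxima is the same statement
for `-ω`.
-/

namespace Cadlag

variable {ω : ℝ → ℝ}

theorem tendsto_leftLim_s5 (h : Cadlag ω) (x : ℝ) :
    Tendsto ω (𝓝[<] x) (𝓝 (leftLim ω x)) := by
  obtain ⟨l, hl⟩ := h.2 x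
  rwa [leftLim_eq_of_tendsto hl]

theorem leftLim_le_of_forall_le (h : Cadlag ω) {a t S : ℝ} (hat : a < t)
    (hS : ∀ s ∈ Ioo a t, ω s ≤ S) : leftLim ω t ≤ S :=
  le_of_tendsto (h.tendsto_leftLim_s5 t) (mem_of_superset (Ioo_mem_nhdsLT hat) hS)

theorem neg (h : Cadlag ω) : Cadlag (fun t => -ω t) :=
  ⟨fun x => (h.1 x).neg, fun x => ⟨_, (h.tendsto_leftLim_s5 x).neg⟩⟩

theorem leftLim_neg (h : Cadlag ω) (x : ℝ) : leftLim (fun t => -ω t) x = -leftLim ω x :=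
  leftLim_eq_of_tendsto (h.tendsto_leftLim_s5 x).neg

theorem exists_clusterPt_of_neBot (h : Cadlag ω) {K : Set ℝ} (hK : IsCompact K)
    {g : Filter ℝ} (hg : (g ⊓ 𝓟 (ω '' K)).NeBot) :
    ∃ t ∈ K, ClusterPt (ω t) g ∨ ClusterPt (leftLim ω t) g := by
  set F := comap ω g ⊓ 𝓟 K
  have : F.NeBot := by rwa [neBot_inf_comap_iff_map', map_principal]
  obtain ⟨t, htK, ht⟩ := hK (f := F) inf_le_right
  have hF : Tendsto ω F g := tendsto_comap.mono_left inf_le_left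
  rw [ClusterPt, ← nhdsLT_sup_nhdsGE, inf_sup_right, sup_neBot] at ht
  refine ⟨t, htK, ht.symm.imp (fun hR => ?_) (fun hL => ?_)⟩
  · exact ((h.1 t).tendsto.inf hF).neBot (hx := hR)
  · exact ((h.tendsto_leftLim_s5 t).inf hF).neBot (hx := hL)

theorem bddAbove_image (h : Cadlag ω) {K : Set ℝ} (hK : IsCompact K) :
    BddAbove (ω '' K) := by
  by_contra hunb
  have : (atTop ⊓ 𝓟 (ω '' K)).NeBot := by
    refine inf_principal_neBot_iff.2 fun U hU => ?_
    obtain ⟨a, ha⟩ := mem_atTop_sets.1 hU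
    obtain ⟨y, hy, hay⟩ := not_bddAbove_iff.1 hunb a
    exact ⟨y, ha y hay.le, hy⟩
  obtain ⟨t, -, ht | ht⟩ := h.exists_clusterPt_of_neBot hK this <;>
    exact ht.ne (disjoint_nhds_atTop _).eq_bot

theorem exists_eq_sSup_image (h : Cadlag ω) {K : Set ℝ} (hK : IsCompact K)
    (hne : K.Nonempty) : ∃ t ∈ K, ω t = sSup (ω '' K) ∨ leftLim ω t = sSup (ω '' K) := by
  have hS := csSup_mem_closure (hne.image ω) (h.bddAbove_image hK)
  obtain ⟨t, htK, ht⟩ :=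
    h.exists_clusterPt_of_neBot hK (mem_closure_iff_nhdsWithin_neBot.1 hS)
  refine ⟨t, htK, ht.imp (fun h' => ?_) (fun h' => ?_)⟩ <;>
    exact not_not.1 (disjoint_nhds_nhds.not.1 (clusterPt_iff_not_disjoint.1 h'))

theorem localExtremum_of_neg (h : Cadlag ω) {x0 : ℝ}
    (hx0 : LocalExtremum (fun t => -ω t) x0) : LocalExtremum ω x0 := by
  simp only [LocalExtremum, LeftLocalMax, RightLocalMax, LeftLocalMin, RightLocalMin,
    h.leftLim_neg, neg_le_neg_iff] at hx0 ⊢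
  rcases hx0 with h' | h' | h' | h'
  exacts [Or.inr (Or.inr (Or.inl h')), Or.inr (Or.inr (Or.inr h')), Or.inl h',
    Or.inr (Or.inl h')]

theorem cMaximum_iff (h : Cadlag ω) {c x0 : ℝ} :
    CMaximum ω c x0 ↔ ∃ ξ ζ : ℝ, ξ < x0 ∧ x0 < ζ ∧
      ω ξ + c ≤ max (ω x0) (leftLim ω x0) ∧
      leftLim ω ζ + c ≤ max (ω x0) (leftLim ω x0) ∧
      ∀ x ∈ Ioo ξ ζ, x ≠ x0 → max (ω x) (leftLim ω x) < max (ω x0) (leftLim ω x0) := by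
  have hneg : ∀ a b : ℝ, -a + c ≤ -b ↔ b + c ≤ a := fun a b => by
    constructor <;> intro <;> linarith
  simp only [CMaximum, CMinimum, h.leftLim_neg, min_neg_neg, neg_lt_neg_iff, hneg]

end Cadlag

theorem localExtremum_of_forall_le_of_eq {ω : ℝ → ℝ} {a b z S : ℝ} (hz : z ∈ Ioo a b)
    (hS : ∀ t ∈ Icc a b, ω t ≤ S) (hzS : ω z = S ∨ leftLim ω z = S) : LocalExtremum ω z := by
  rcases hzS with hzS | hzS
  · exact Or.inr (Or.inl ⟨b - z, sub_pos.2 hz.2, fun t ht =>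
      hzS ▸ hS t ⟨by linarith [hz.1, ht.1], by linarith [ht.2]⟩⟩)
  · exact Or.inl ⟨z - a, sub_pos.2 hz.1, fun t ht =>
      hzS ▸ hS t ⟨by linarith [ht.1], by linarith [ht.2, hz.2]⟩⟩

theorem CMinimum.localExtremum {ω : ℝ → ℝ} {c x0 : ℝ} (hm : CMinimum ω c x0) :
    LocalExtremum ω x0 := by
  obtain ⟨ξ, ζ, hξ, hζ, -, -, hlt⟩ := hm
  have hle : ∀ x ∈ Ioo ξ ζ, x ≠ x0 → min (ω x0) (leftLim ω x0) ≤ ω x :=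
    fun x hx hne => (hlt x hx hne).le.trans (min_le_left _ _)
  rcases le_total (ω x0) (leftLim ω x0) with hω | hω
  · refine Or.inr (Or.inr (Or.inr ⟨ζ - x0, sub_pos.2 hζ, fun x hx => ?_⟩))
    have := hle x ⟨hξ.trans hx.1, by linarith [hx.2]⟩ hx.1.ne'
    rwa [min_eq_left hω] at this
  · refine Or.inr (Or.inr (Or.inl ⟨x0 - ξ, sub_pos.2 hξ, fun x hx => ?_⟩))
    have := hle x ⟨by linarith [hx.1], hx.2.trans hζ⟩ hx.2.ne
    rwa [min_eq_right hω] at this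

theorem CMinimum.min_add_le_of_forall_le {ω : ℝ → ℝ} {c x y S : ℝ} (hx : CMinimum ω c x)
    (hy : CMinimum ω c y) (hxy : x < y) (hS : ∀ t ∈ Icc x y, ω t ≤ S)
    (hSL : ∀ t ∈ Ioc x y, leftLim ω t ≤ S) :
    min (ω x) (leftLim ω x) + c ≤ S ∧ min (ω y) (leftLim ω y) + c ≤ S := by
  obtain ⟨ξ, ζ, hξ, hζ, -, hxζ, hx⟩ := hx
  obtain ⟨ξ', ζ', hξ', hζ', hyξ', -, hy⟩ := hy
  set mx := min (ω x) (leftLim ω x)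
  set my := min (ω y) (leftLim ω y)
  have hx' : mx + c ≤ S ∨ mx < my := by
    rcases le_or_gt ζ y with hζy | hyζ
    · exact Or.inl (hxζ.trans (hSL ζ ⟨hζ, hζy⟩))
    · exact Or.inr (hx y ⟨hξ.trans hxy, hyζ⟩ hxy.ne')
  have hy' : my + c ≤ S ∨ my < mx := by
    rcases le_or_gt x ξ' with hxξ | hξx
    · exact Or.inl (hyξ'.trans (hS ξ' ⟨hxξ, hξ'.le⟩))
    · exact Or.inr (hy x ⟨hξx, hxy.trans hζ'⟩ hxy.ne)
  rcases hx' with hx' | hx' <;> rcases hy' with hy' | hy' <;> constructor <;> linarith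

theorem Cadlag.exists_cMaximum_between_cMinima {ω : ℝ → ℝ} (h : Cadlag ω)
    (hext : ∀ x0 : ℝ, LocalExtremum ω x0 → ω x0 = leftLim ω x0)
    (hdist : ∀ x y : ℝ, LocalExtremum ω x → LocalExtremum ω y → x ≠ y → ω x ≠ ω y)
    {c : ℝ} (hc : 0 < c) {x y : ℝ} (hxy : x < y) (hx : CMinimum ω c x)
    (hy : CMinimum ω c y) : ∃ z ∈ Ioo x y, CMaximum ω c z := by
  set S := sSup (ω '' Icc x y)
  have hS : ∀ t ∈ Icc x y, ω t ≤ S := fun t ht =>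
    le_csSup (h.bddAbove_image isCompact_Icc) (mem_image_of_mem ω ht)
  have hSL : ∀ t ∈ Ioc x y, leftLim ω t ≤ S := fun t ht =>
    h.leftLim_le_of_forall_le ht.1 fun s hs => hS s ⟨hs.1.le, hs.2.le.trans ht.2⟩
  have hωx := hext x hx.localExtremum
  have hωy := hext y hy.localExtremum
  obtain ⟨hxS, hyS⟩ := hx.min_add_le_of_forall_le hy hxy hS hSL
  rw [← hωx, min_self] at hxS
  rw [← hωy, min_self] at hyS
  have hattain : ∀ t ∈ Ioo x y, (ω t = S ∨ leftLim ω t = S) → LocalExtremum ω t ∧ ω t = S :=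
    fun t ht htS =>
      have hloc := localExtremum_of_forall_le_of_eq ht hS htS
      ⟨hloc, htS.elim id (hext t hloc).trans⟩
  obtain ⟨z, hz, hzS⟩ := h.exists_eq_sSup_image isCompact_Icc (nonempty_Icc.2 hxy.le)
  have hz' : z ∈ Ioo x y := by
    refine ⟨hz.1.lt_of_ne ?_, hz.2.lt_of_ne ?_⟩ <;> rintro rfl
    · rw [← hωx, or_self] at hzS; linarith
    · rw [← hωy, or_self] at hzS; linarith
  obtain ⟨hzloc, hzS⟩ := hattain z hz' hzS
  have hmax : max (ω z) (leftLim ω z) = S := by rw [← hext z hzloc, max_self, hzS]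
  refine ⟨z, hz', h.cMaximum_iff.2 ⟨x, y, hz'.1, hz'.2, ?_, ?_, fun t ht htz => ?_⟩⟩
  · linarith
  · rw [← hωy]; linarith
  · obtain ⟨hωt, hLt⟩ : ω t ≠ S ∧ leftLim ω t ≠ S := not_or.1 fun htS =>
      hdist t z (hattain t ht htS).1 hzloc htz ((hattain t ht htS).2.trans hzS.symm)
    rw [hmax]
    exact max_lt ((hS t (Ioo_subset_Icc_self ht)).lt_of_ne hωt)
      ((hSL t (Ioo_subset_Ioc_self ht)).lt_of_ne hLt)

/-- Let `ω : ℝ → ℝ` be càdlàg, continuous at its local extrema, with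
pairwise distinct values at its local extrema.  Then for every `c > 0` the `c`-maxima and
`c`-minima of `ω` alternate: strictly between two distinct `c`-minima there is a
`c`-maximum, and strictly between two distinct `c`-maxima there is a `c`-minimum. -/
theorem cExtrema_alternate
    (ω : ℝ → ℝ) (hcad : Cadlag ω)
    (hext : ∀ x0 : ℝ, LocalExtremum ω x0 → ω x0 = Function.leftLim ω x0)
    (hdist : ∀ x y : ℝ, LocalExtremum ω x → LocalExtremum ω y → x ≠ y → ω x ≠ ω y)
    (c : ℝ) (hc : 0 < c) :
    (∀ x y : ℝ, x < y → CMinimum ω c x → CMinimum ω c y →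
      ∃ z : ℝ, x < z ∧ z < y ∧ CMaximum ω c z) ∧
    (∀ x y : ℝ, x < y → CMaximum ω c x → CMaximum ω c y →
      ∃ z : ℝ, x < z ∧ z < y ∧ CMinimum ω c z) := by
  refine ⟨fun x y hxy hx hy => ?_, fun x y hxy hx hy => ?_⟩
  · obtain ⟨z, hz, hzmax⟩ := hcad.exists_cMaximum_between_cMinima hext hdist hc hxy hx hy
    exact ⟨z, hz.1, hz.2, hzmax⟩
  · have hext' : ∀ x0, LocalExtremum (fun t => -ω t) x0 →
        -ω x0 = leftLim (fun t => -ω t) x0 := fun x0 hx0 => by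
      rw [hcad.leftLim_neg, hext x0 (hcad.localExtremum_of_neg hx0)]
    have hdist' : ∀ a b, LocalExtremum (fun t => -ω t) a → LocalExtremum (fun t => -ω t) b →
        a ≠ b → -ω a ≠ -ω b := fun a b ha hb hab =>
      neg_injective.ne
        (hdist a b (hcad.localExtremum_of_neg ha) (hcad.localExtremum_of_neg hb) hab)
    obtain ⟨z, hz, hzmax⟩ :=
      hcad.neg.exists_cMaximum_between_cMinima hext' hdist' hc hxy hx hy
    refine ⟨z, hz.1, hz.2, ?_⟩
    simpa only [CMaximum, neg_neg] using hzmax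
end

section
/- Let ω : [0,∞) → ℝ be càdlàg and continuous at its local extrema, with ω(0) = 0. For y > 0 set τ_y(ω) = inf{ t ≥ 0 : ω(t) ≥ y }, and assume τ_1(ω) < ∞. Then lim_{y→1−} ω(τ_y(ω)) = ω(τ_1(ω)). -/
open Filter Set Topology Function

/-- `x0` is a left local maximum of `ω` relative to the domain `[0,∞)`. -/
def LeftLocalMax0 (ω : ℝ → ℝ) (x0 : ℝ) : Prop :=
  0 < x0 ∧ ∃ ε > (0 : ℝ), ∀ x ∈ Set.Ioo (x0 - ε) x0 ∩ Set.Ici 0,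
    ω x ≤ Function.leftLim ω x0

/-- `x0` is a right local maximum of `ω` relative to the domain `[0,∞)`. -/
def RightLocalMax0 (ω : ℝ → ℝ) (x0 : ℝ) : Prop :=
  0 ≤ x0 ∧ ∃ ε > (0 : ℝ), ∀ x ∈ Set.Ioo x0 (x0 + ε), ω x ≤ ω x0

/-- `x0` is a left local minimum of `ω` relative to the domain `[0,∞)`. -/
def LeftLocalMin0 (ω : ℝ → ℝ) (x0 : ℝ) : Prop :=
  0 < x0 ∧ ∃ ε > (0 : ℝ), ∀ x ∈ Set.Ioo (x0 - ε) x0 ∩ Set.Ici 0,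
    Function.leftLim ω x0 ≤ ω x

/-- `x0` is a right local minimum of `ω` relative to the domain `[0,∞)`. -/
def RightLocalMin0 (ω : ℝ → ℝ) (x0 : ℝ) : Prop :=
  0 ≤ x0 ∧ ∃ ε > (0 : ℝ), ∀ x ∈ Set.Ioo x0 (x0 + ε), ω x0 ≤ ω x

/-- `x0` is a local extremum of `ω` relative to the domain `[0,∞)`. -/
def LocalExtremum0 (ω : ℝ → ℝ) (x0 : ℝ) : Prop :=
  LeftLocalMax0 ω x0 ∨ RightLocalMax0 ω x0 ∨ LeftLocalMin0 ω x0 ∨ RightLocalMin0 ω x0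

/-- `τ_y(ω) = inf{ t ≥ 0 : ω(t) ≥ y }`. -/
noncomputable def tauTime (y : ℝ) (ω : ℝ → ℝ) : ℝ := sInf {t : ℝ | 0 ≤ t ∧ y ≤ ω t}

/-! The hitting times `τ_y` increase with `y`; let `σ = lim_{y→1−} τ_y ≤ τ_1`. If some `τ_y`
with `y < 1` already equals `σ`, then `ω(σ) ≥ y'` for all `y' < 1` close to `1`, so `σ = τ_1` and
`τ_y` is eventually constant. Otherwise `τ_y ↑ σ` strictly, and `y ≤ ω(τ_y) < 1` forces
`ω(σ−) = 1`; as `ω < 1` on `[0, σ)`, the point `σ` is a left local maximum, so by continuity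
at local extrema `ω(σ) = 1`, whence `σ = τ_1` and `ω(τ_y) → 1 = ω(τ_1)`. -/

section HittingTime

variable {ω : ℝ → ℝ} {a y t : ℝ}

lemma bddBelow_hittingSet (y : ℝ) (ω : ℝ → ℝ) : BddBelow {t : ℝ | 0 ≤ t ∧ y ≤ ω t} :=
  ⟨0, fun _ ht => ht.1⟩

lemma tauTime_nonneg (y : ℝ) (ω : ℝ → ℝ) : 0 ≤ tauTime y ω :=
  Real.sInf_nonneg fun _ ht => ht.1

lemma tauTime_le (ht : 0 ≤ t) (hy : y ≤ ω t) : tauTime y ω ≤ t :=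
  csInf_le (bddBelow_hittingSet y ω) ⟨ht, hy⟩

lemma lt_of_lt_tauTime (ht₀ : 0 ≤ t) (ht : t < tauTime y ω) : ω t < y := by
  by_contra! hy
  exact (tauTime_le ht₀ hy).not_gt ht

lemma monotoneOn_tauTime (hne : {t : ℝ | 0 ≤ t ∧ a ≤ ω t}.Nonempty) :
    MonotoneOn (fun y => tauTime y ω) (Iic a) := fun _ _ _ hy' hyy' =>
  csInf_le_csInf (bddBelow_hittingSet _ ω) (hne.mono fun _ ht => ⟨ht.1, hy'.trans ht.2⟩)
    fun _ ht => ⟨ht.1, hyy'.trans ht.2⟩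

/-- `τ_y` lies in the closure of the hitting set, which lies to its right, where `ω` is
right-continuous. -/
lemma le_omega_tauTime (hne : {t : ℝ | 0 ≤ t ∧ y ≤ ω t}.Nonempty)
    (hω : ContinuousWithinAt ω (Ici (tauTime y ω)) (tauTime y ω)) : y ≤ ω (tauTime y ω) := by
  have hmem := csInf_mem_closure hne (bddBelow_hittingSet y ω)
  have hcont : ContinuousWithinAt ω {t : ℝ | 0 ≤ t ∧ y ≤ ω t} (tauTime y ω) :=
    hω.mono fun _ ht => csInf_le (bddBelow_hittingSet y ω) ht
  exact closure_minimal (image_subset_iff.2 fun _ ht => ht.2) isClosed_Ici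
    (hcont.mem_closure_image hmem)

lemma tauTime_pos (h₀ : ω 0 < y) (hy : y ≤ ω (tauTime y ω)) : 0 < tauTime y ω := by
  refine (tauTime_nonneg y ω).lt_of_ne fun h => ?_
  rw [← h] at hy
  linarith

end HittingTime

noncomputable def tauTimeLeft (a : ℝ) (ω : ℝ → ℝ) : ℝ :=
  sSup ((fun y => tauTime y ω) '' Iio a)

section LeftLimit

variable {ω : ℝ → ℝ} {a y : ℝ}
  (hright : ∀ x : ℝ, 0 ≤ x → ContinuousWithinAt ω (Set.Ici x) x)
  (hne : {t : ℝ | 0 ≤ t ∧ a ≤ ω t}.Nonempty)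
include hne

lemma bddAbove_image_tauTime : BddAbove ((fun y => tauTime y ω) '' Iio a) :=
  ⟨tauTime a ω, forall_mem_image.2 fun _ hy =>
    monotoneOn_tauTime hne (mem_Iic.2 hy.le) (mem_Iic.2 le_rfl) hy.le⟩

lemma tauTime_le_tauTimeLeft (hy : y < a) : tauTime y ω ≤ tauTimeLeft a ω :=
  le_csSup (bddAbove_image_tauTime hne) (mem_image_of_mem _ hy)

lemma tauTimeLeft_le_tauTime : tauTimeLeft a ω ≤ tauTime a ω :=
  csSup_le (nonempty_Iio.image _) fun _ ⟨_, hy, hτ⟩ =>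
    hτ ▸ monotoneOn_tauTime hne (mem_Iic.2 hy.le) (mem_Iic.2 le_rfl) hy.le

lemma tendsto_tauTime_tauTimeLeft :
    Tendsto (fun y => tauTime y ω) (𝓝[<] a) (𝓝 (tauTimeLeft a ω)) :=
  ((monotoneOn_tauTime hne).mono Iio_subset_Iic_self).tendsto_nhdsLT (bddAbove_image_tauTime hne)

lemma hittingSet_nonempty_of_le (hy : y ≤ a) : {t : ℝ | 0 ≤ t ∧ y ≤ ω t}.Nonempty :=
  hne.mono fun _ ht => ⟨ht.1, hy.trans ht.2⟩

lemma tauTimeLeft_eq_tauTime (ha : a ≤ ω (tauTimeLeft a ω)) : tauTimeLeft a ω = tauTime a ω := by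
  refine (tauTimeLeft_le_tauTime hne).antisymm (tauTime_le ?_ ha)
  exact (tauTime_nonneg (a - 1) ω).trans (tauTime_le_tauTimeLeft hne (sub_one_lt a))

include hright

lemma tauTimeLeft_pos (h₀ : ω 0 < a) : 0 < tauTimeLeft a ω := by
  obtain ⟨y, h₀y, hya⟩ := exists_between h₀
  have hhit := le_omega_tauTime (hittingSet_nonempty_of_le hne hya.le)
    (hright _ (tauTime_nonneg y ω))
  exact (tauTime_pos h₀y hhit).trans_le (tauTime_le_tauTimeLeft hne hya)

lemma eventually_tauTime_eq_tauTime (hy : y < a) (heq : tauTime y ω = tauTimeLeft a ω) :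
    ∀ᶠ y' in 𝓝[<] a, tauTime y' ω = tauTime a ω := by
  have hconst : ∀ᶠ y' in 𝓝[<] a, tauTime y' ω = tauTimeLeft a ω := by
    filter_upwards [Ioo_mem_nhdsLT hy] with y' hy'
    exact (tauTime_le_tauTimeLeft hne hy'.2).antisymm <| heq ▸
      monotoneOn_tauTime hne (mem_Iic.2 hy.le) (mem_Iic.2 hy'.2.le) hy'.1.le
  have ha : a ≤ ω (tauTimeLeft a ω) := by
    refine le_of_tendsto (tendsto_nhdsWithin_of_tendsto_nhds (s := Iio a) tendsto_id) ?_
    filter_upwards [hconst, self_mem_nhdsWithin] with y' hτ (hy' : y' < a)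
    rw [← hτ]
    exact le_omega_tauTime (hittingSet_nonempty_of_le hne hy'.le) (hright _ (tauTime_nonneg y' ω))
  rwa [← tauTimeLeft_eq_tauTime hne ha]

variable (hlt : ∀ y < a, tauTime y ω < tauTimeLeft a ω)
include hlt

lemma tendsto_omega_tauTime_of_lt :
    Tendsto (fun y => ω (tauTime y ω)) (𝓝[<] a) (𝓝 a) := by
  refine tendsto_of_tendsto_of_tendsto_of_le_of_le' (tendsto_nhdsWithin_of_tendsto_nhds tendsto_id)
    tendsto_const_nhds ?_ ?_ <;> filter_upwards [self_mem_nhdsWithin] with y (hy : y < a)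
  · exact le_omega_tauTime (hittingSet_nonempty_of_le hne hy.le) (hright _ (tauTime_nonneg y ω))
  · exact (lt_of_lt_tauTime (tauTime_nonneg y ω)
      ((hlt y hy).trans_le (tauTimeLeft_le_tauTime hne))).le

/-- When `τ_y ↑ τ_{a−}` strictly, `τ_{a−}` is a left local maximum with left limit `a`. -/
lemma omega_tauTimeLeft_eq
    (hleft : ∀ x : ℝ, 0 < x → ∃ l : ℝ, Tendsto ω (𝓝[<] x) (𝓝 l))
    (hext : ∀ x0 : ℝ, 0 < x0 → LocalExtremum0 ω x0 → ω x0 = Function.leftLim ω x0)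
    (h₀ : ω 0 < a) : ω (tauTimeLeft a ω) = a := by
  set σ := tauTimeLeft a ω
  have hσ : 0 < σ := tauTimeLeft_pos hright hne h₀
  obtain ⟨l, hl⟩ := hleft σ hσ
  have hτ : Tendsto (fun y => tauTime y ω) (𝓝[<] a) (𝓝[<] σ) :=
    tendsto_nhdsWithin_iff.2 ⟨tendsto_tauTime_tauTimeLeft hne,
      eventually_nhdsWithin_of_forall fun y hy => hlt y hy⟩
  have hla : l = a :=
    tendsto_nhds_unique (hl.comp hτ) (tendsto_omega_tauTime_of_lt hright hne hlt)
  have hleftLim : Function.leftLim ω σ = a := hla ▸ leftLim_eq_of_tendsto hl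
  have hmax : LeftLocalMax0 ω σ := ⟨hσ, σ, hσ, fun x hx => hleftLim ▸
    (lt_of_lt_tauTime hx.2 (hx.1.2.trans_le (tauTimeLeft_le_tauTime hne))).le⟩
  exact (hext σ hσ (Or.inl hmax)).trans hleftLim

end LeftLimit

/-- Let `ω : [0,∞) → ℝ` be càdlàg and continuous at its local extrema,
with `ω 0 = 0`; assume `τ_1(ω) < ∞`.  Then `lim_{y→1−} ω(τ_y(ω)) = ω(τ_1(ω))`. -/
theorem tendsto_omega_tau_left_one
    (ω : ℝ → ℝ)
    (hright : ∀ x : ℝ, 0 ≤ x → ContinuousWithinAt ω (Set.Ici x) x)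
    (hleft : ∀ x : ℝ, 0 < x → ∃ l : ℝ, Tendsto ω (𝓝[<] x) (𝓝 l))
    (hext : ∀ x0 : ℝ, 0 < x0 → LocalExtremum0 ω x0 → ω x0 = Function.leftLim ω x0)
    (h0 : ω 0 = 0)
    (hfin : {t : ℝ | 0 ≤ t ∧ 1 ≤ ω t}.Nonempty) :
    Tendsto (fun y : ℝ => ω (tauTime y ω)) (𝓝[<] (1 : ℝ)) (𝓝 (ω (tauTime 1 ω))) := by
  by_cases hattained : ∃ y < 1, tauTime y ω = tauTimeLeft 1 ω
  · obtain ⟨y, hy, heq⟩ := hattained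
    exact tendsto_const_nhds.congr' <|
      (eventually_tauTime_eq_tauTime hright hfin hy heq).mono fun _ hτ => congrArg ω hτ.symm
  · have hlt : ∀ y < 1, tauTime y ω < tauTimeLeft 1 ω := fun y hy =>
      (tauTime_le_tauTimeLeft hfin hy).lt_of_ne fun heq => hattained ⟨y, hy, heq⟩
    have hσ : ω (tauTimeLeft 1 ω) = 1 :=
      omega_tauTimeLeft_eq hright hfin hlt hleft hext (h0.trans_lt one_pos)
    rw [← tauTimeLeft_eq_tauTime hfin hσ.ge, hσ]
    exact tendsto_omega_tauTime_of_lt hright hfin hlt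
end
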